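/- InqBQ is not entailment-compact: there exist a set of formulas Φ and a formula ψ such that Φ ⊨ ψ (entailment over all first-order information models), but for every finite Φ₀ ⊆ Φ, Φ₀ ⊭ ψ. -/

import Mathlib

/-!
Take `Φ = {η, ρ} ∪ {χₙ | n ∈ ℕ}` and `ψ = θ`. On a state supporting `ρ` the relation `∼` is
the same at every world, so everything can be read off its set `Q` of classes, and the `χₙ`
make `Q` infinite. If `θ` fails, every pair of classes occurs as `(a_w, b_w)` at some world, so
the graph of any injection `Q → Q` is realised by a substate; there `a` and `b` determine each
other, and `η` forces the injection to be onto whenever its image is. An infinite `Q` has an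
injection that is not onto, a contradiction. Conversely, a finite `Φ₀` contains only
finitely many `χₙ`, and the canonical id-model over a large enough finite domain supports
`η`, `ρ` and those `χₙ` on the state of all worlds, but not `θ`.
-/

namespace InqBQ

/-- A signature: predicate symbols and function symbols, each with an arity. -/
structure Sig where
  Pred : Type
  parity : Pred → ℕ
  Func : Type
  farity : Func → ℕ

/-- Terms over a signature, with variables indexed by `ℕ`. -/
inductive Term (σ : Sig) : Type where
  | var : ℕ → Term σ
  | func : (f : σ.Func) → (Fin (σ.farity f) → Term σ) → Term σ

/-- Formulas of InqBQ. -/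
inductive Formula (σ : Sig) : Type where
  | pred : (P : σ.Pred) → (Fin (σ.parity P) → Term σ) → Formula σ
  | eq : Term σ → Term σ → Formula σ
  | falsum : Formula σ
  | conj : Formula σ → Formula σ → Formula σ
  | idisj : Formula σ → Formula σ → Formula σ
  | impl : Formula σ → Formula σ → Formula σ
  | all : ℕ → Formula σ → Formula σ
  | iex : ℕ → Formula σ → Formula σ

variable {σ : Sig}

/-- ¬φ := φ → ⊥ -/
def Formula.neg (φ : Formula σ) : Formula σ := .impl φ .falsum

/-- ?φ := φ ⩒ ¬φ -/
def Formula.qm (φ : Formula σ) : Formula σ := .idisj φ φ.neg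

/-- ⊤ := ¬⊥ -/
def Formula.verum : Formula σ := Formula.neg .falsum

/-- Classical formulas: no inquisitive disjunction, no inquisitive existential. -/
def Formula.IsClassical : Formula σ → Prop
  | .pred _ _ => True
  | .eq _ _ => True
  | .falsum => True
  | .conj φ ψ => φ.IsClassical ∧ ψ.IsClassical
  | .idisj _ _ => False
  | .impl φ ψ => φ.IsClassical ∧ ψ.IsClassical
  | .all _ φ => φ.IsClassical
  | .iex _ _ => False

/-- The variable `n` occurs in a term. -/
def Term.VarOccurs : Term σ → ℕ → Prop
  | .var m, n => m = n
  | .func _ ts, n => ∃ i, (ts i).VarOccurs n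

/-- The variable `n` occurs free in a formula. -/
def Formula.FreeVar : Formula σ → ℕ → Prop
  | .pred _ ts, n => ∃ i, (ts i).VarOccurs n
  | .eq t t', n => t.VarOccurs n ∨ t'.VarOccurs n
  | .falsum, _ => False
  | .conj φ ψ, n => φ.FreeVar n ∨ ψ.FreeVar n
  | .idisj φ ψ, n => φ.FreeVar n ∨ ψ.FreeVar n
  | .impl φ ψ, n => φ.FreeVar n ∨ ψ.FreeVar n
  | .all x φ, n => n ≠ x ∧ φ.FreeVar n
  | .iex x φ, n => n ≠ x ∧ φ.FreeVar n

/-- A sentence is a formula with no free variables. -/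
def Formula.IsSentence (φ : Formula σ) : Prop := ∀ n, ¬ φ.FreeVar n

/-- A first-order information model `M = (W, D, I, ∼)`. -/
structure Model (σ : Sig) where
  W : Type
  D : Type
  wNonempty : Nonempty W
  dNonempty : Nonempty D
  predI : W → (P : σ.Pred) → (Fin (σ.parity P) → D) → Prop
  funcI : W → (f : σ.Func) → (Fin (σ.farity f) → D) → D
  eqI : W → D → D → Prop
  eqEquiv : ∀ w, Equivalence (eqI w)
  predCongr : ∀ w P (as bs : Fin (σ.parity P) → D),
      (∀ i, eqI w (as i) (bs i)) → (predI w P as ↔ predI w P bs)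
  funcCongr : ∀ w f (as bs : Fin (σ.farity f) → D),
      (∀ i, eqI w (as i) (bs i)) → eqI w (funcI w f as) (funcI w f bs)

/-- Denotation `[t]^g_w` of a term at a world under an assignment. -/
def Term.val (M : Model σ) (w : M.W) (g : ℕ → M.D) : Term σ → M.D
  | .var n => g n
  | .func f ts => M.funcI w f (fun i => (ts i).val M w g)

/-- The support relation `M, s ⊨_g φ`. -/
def Support (M : Model σ) : Set M.W → (ℕ → M.D) → Formula σ → Prop
  | s, g, .pred P ts => ∀ w ∈ s, M.predI w P (fun i => (ts i).val M w g)
  | s, g, .eq t t' => ∀ w ∈ s, M.eqI w (t.val M w g) (t'.val M w g)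
  | s, _, .falsum => s = ∅
  | s, g, .conj φ ψ => Support M s g φ ∧ Support M s g ψ
  | s, g, .idisj φ ψ => Support M s g φ ∨ Support M s g ψ
  | s, g, .impl φ ψ => ∀ t : Set M.W, t ⊆ s → Support M t g φ → Support M t g ψ
  | s, g, .all x φ => ∀ d : M.D, Support M s (Function.update g x d) φ
  | s, g, .iex x φ => ∃ d : M.D, Support M s (Function.update g x d) φ

/-- Id-models: `=` is interpreted as identity on the domain at each world. -/
def Model.IsId (M : Model σ) : Prop := ∀ w (d d' : M.D), M.eqI w d d' ↔ d = d'

/-- Entailment in InqBQ. -/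
def Entails (Φ : Set (Formula σ)) (ψ : Formula σ) : Prop :=
  ∀ (M : Model σ) (s : Set M.W) (g : ℕ → M.D),
    (∀ φ ∈ Φ, Support M s g φ) → Support M s g ψ

/-- Entailment restricted to id-models. -/
def EntailsId (Φ : Set (Formula σ)) (ψ : Formula σ) : Prop :=
  ∀ (M : Model σ), M.IsId → ∀ (s : Set M.W) (g : ℕ → M.D),
    (∀ φ ∈ Φ, Support M s g φ) → Support M s g ψ

/-- Validity in InqBQ. -/
def Valid (ψ : Formula σ) : Prop :=
  ∀ (M : Model σ) (s : Set M.W) (g : ℕ → M.D), Support M s g ψ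

/-- Validity over id-models. -/
def IdValid (ψ : Formula σ) : Prop :=
  ∀ (M : Model σ), M.IsId → ∀ (s : Set M.W) (g : ℕ → M.D), Support M s g ψ

/-- Equivalence of formulas. -/
def FmEquiv (φ ψ : Formula σ) : Prop :=
  ∀ (M : Model σ) (s : Set M.W) (g : ℕ → M.D), Support M s g φ ↔ Support M s g ψ

/-- A formula is truth-conditional if support at a state reduces to truth at each world. -/
def TruthConditional (φ : Formula σ) : Prop :=
  ∀ (M : Model σ) (s : Set M.W) (g : ℕ → M.D),
    Support M s g φ ↔ ∀ w ∈ s, Support M {w} g φ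

/-- A standard (Tarskian) relational structure for the signature. -/
structure Struc (σ : Sig) where
  D : Type
  dNonempty : Nonempty D
  predI : (P : σ.Pred) → (Fin (σ.parity P) → D) → Prop
  funcI : (f : σ.Func) → (Fin (σ.farity f) → D) → D

/-- Tarskian term denotation. -/
def Term.tval (A : Struc σ) (g : ℕ → A.D) : Term σ → A.D
  | .var n => g n
  | .func f ts => A.funcI f (fun i => (ts i).tval A g)

/-- Standard Tarskian satisfaction (reading `→` as material implication, `=` as identity). -/
def TSat (A : Struc σ) : (ℕ → A.D) → Formula σ → Prop
  | g, .pred P ts => A.predI P (fun i => (ts i).tval A g)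
  | g, .eq t t' => t.tval A g = t'.tval A g
  | _, .falsum => False
  | g, .conj φ ψ => TSat A g φ ∧ TSat A g ψ
  | g, .idisj φ ψ => TSat A g φ ∨ TSat A g ψ
  | g, .impl φ ψ => TSat A g φ → TSat A g ψ
  | g, .all x φ => ∀ d : A.D, TSat A (Function.update g x d) φ
  | g, .iex x φ => ∃ d : A.D, TSat A (Function.update g x d) φ

/-- Classical first-order (Tarskian) entailment. -/
def FOLEntails (Γ : Set (Formula σ)) (α : Formula σ) : Prop :=
  ∀ (A : Struc σ) (g : ℕ → A.D), (∀ γ ∈ Γ, TSat A g γ) → TSat A g α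

/-- The setoid on the domain given by `∼_w`. -/
def Model.setoidAt (M : Model σ) (w : M.W) : Setoid M.D := ⟨M.eqI w, M.eqEquiv w⟩

/-- The quotient relational structure `𝓜_w = (D/∼_w, I_w^∼)` induced at world `w`. -/
noncomputable def Model.quotStruc (M : Model σ) (w : M.W) : Struc σ where
  D := Quotient (M.setoidAt w)
  dNonempty := Nonempty.map (Quotient.mk (M.setoidAt w)) M.dNonempty
  predI P as := ∃ bs : Fin (σ.parity P) → M.D,
    (∀ i, Quotient.mk (M.setoidAt w) (bs i) = as i) ∧ M.predI w P bs
  funcI f as := Quotient.mk (M.setoidAt w) (M.funcI w f (fun i => (as i).out))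

/-- λt := ∃̷x (x = t). -/
def lam (x : ℕ) (t : Term σ) : Formula σ := .iex x (.eq (.var x) t)

/-- Conjunction of a finite list of formulas. -/
def conjList (l : List (Formula σ)) : Formula σ := l.foldr .conj Formula.verum

/-- x ≠ t. -/
def neTm (x : ℕ) (t : Term σ) : Formula σ := (Formula.eq (.var x) t).neg

/-- ∃̷x (x ≠ t). -/
def iexNe (t : Term σ) : Formula σ := .iex 0 (neTm 0 t)

/-- η := (=(a;b) ∧ =(b;a) ∧ ∃̷x(x≠b)) → ∃̷x(x≠a). -/
def etaOf (a b : Term σ) : Formula σ :=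
  .impl (.conj (.impl (lam 0 a) (lam 0 b))
          (.conj (.impl (lam 0 b) (lam 0 a)) (iexNe b)))
    (iexNe a)

/-- θ := ∃̷x ∃̷y ¬(x = a ∧ y = b). -/
def thetaOf (a b : Term σ) : Formula σ :=
  .iex 0 (.iex 1 (Formula.neg (.conj (.eq (.var 0) a) (.eq (.var 1) b))))

/-- ρ := ∀x∀y ?(x = y). -/
def rho : Formula σ := .all 0 (.all 1 (Formula.qm (.eq (.var 0) (.var 1))))

/-- The signature with exactly two constant symbols `a`, `b` (and no predicates). -/
def sigAB : Sig where
  Pred := Empty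
  parity := fun P => P.elim
  Func := Bool
  farity := fun _ => 0

/-- The constant `a`. -/
def tA : Term sigAB := .func false Fin.elim0

/-- The constant `b`. -/
def tB : Term sigAB := .func true Fin.elim0

def etaAB : Formula sigAB := etaOf tA tB

def thetaAB : Formula sigAB := thetaOf tA tB

/-- `a_w`. -/
def aVal (M : Model sigAB) (w : M.W) : M.D := M.funcI w false Fin.elim0

/-- `b_w`. -/
def bVal (M : Model sigAB) (w : M.W) : M.D := M.funcI w true Fin.elim0

/-- `R_s = {(a_w, b_w) | w ∈ s}`. -/
def RelOf (M : Model sigAB) (s : Set M.W) : Set (M.D × M.D) :=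
  {p | ∃ w ∈ s, p = (aVal M w, bVal M w)}

/-- An id-model (for the signature with the two constants a, b) is full if `R_W = D × D`. -/
def Model.IsFull (M : Model sigAB) : Prop := RelOf M Set.univ = Set.univ

/-- Classical existential quantifier ∃xφ := ¬∀x¬φ. -/
def cExists (x : ℕ) (φ : Formula σ) : Formula σ := (Formula.all x φ.neg).neg

/-- ⋀_{i<j<n} (xᵢ ≠ xⱼ). -/
def distinctFm (n : ℕ) : Formula sigAB :=
  conjList ((List.range n).flatMap fun i => (List.range n).filterMap fun j =>
    if i < j then some ((Formula.eq (.var i) (.var j)).neg) else none)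

/-- χₙ := ∃x₁…∃xₙ ⋀_{i<j} (xᵢ ≠ xⱼ), expressing that there are at least n elements. -/
def chi (n : ℕ) : Formula sigAB := (List.range n).foldr cExists (distinctFm n)

/-- The canonical full id-model over a nonempty domain `D`: worlds are pairs `(d, e)`,
with `a_{(d,e)} = d` and `b_{(d,e)} = e`. -/
def canonModel (D : Type) (hD : Nonempty D) : Model sigAB where
  W := D × D
  D := D
  wNonempty := Nonempty.map (fun d => (d, d)) hD
  dNonempty := hD
  predI := fun _ P => P.elim
  funcI := fun w f _ => cond f w.2 w.1
  eqI := fun _ => Eq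
  eqEquiv := fun _ => eq_equivalence
  predCongr := fun _ P => P.elim
  funcCongr := fun _ _ _ _ _ => rfl

/-- Extending a signature with two fresh constant symbols `a`, `b`. -/
def sigExt (σ : Sig) : Sig where
  Pred := σ.Pred
  parity := σ.parity
  Func := σ.Func ⊕ Bool
  farity := Sum.elim σ.farity (fun _ => 0)

/-- Lift of a term to the extended signature. -/
def Term.lift : Term σ → Term (sigExt σ)
  | .var n => .var n
  | .func f ts => .func (Sum.inl f) (fun i => (ts i).lift)

/-- Lift of a formula to the extended signature. -/
def Formula.lift : Formula σ → Formula (sigExt σ)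
  | .pred P ts => .pred P (fun i => (ts i).lift)
  | .eq t t' => .eq t.lift t'.lift
  | .falsum => .falsum
  | .conj φ ψ => .conj φ.lift ψ.lift
  | .idisj φ ψ => .idisj φ.lift ψ.lift
  | .impl φ ψ => .impl φ.lift ψ.lift
  | .all x φ => .all x φ.lift
  | .iex x φ => .iex x φ.lift

/-- The fresh constant `a` of the extended signature. -/
def extA : Term (sigExt σ) := .func (Sum.inr false) Fin.elim0

/-- The fresh constant `b` of the extended signature. -/
def extB : Term (sigExt σ) := .func (Sum.inr true) Fin.elim0

/-- The canonical full id-model based on a relational structure `𝓜`: worlds are pairs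
`(d, e)`; `a_{(d,e)} = d`, `b_{(d,e)} = e`, and all symbols of `σ` are interpreted
rigidly as in `𝓜`. -/
def canonModelOf (A : Struc σ) : Model (sigExt σ) where
  W := A.D × A.D
  D := A.D
  wNonempty := Nonempty.map (fun d => (d, d)) A.dNonempty
  dNonempty := A.dNonempty
  predI := fun _ P => A.predI P
  funcI := fun w f => match f with
    | .inl f₀ => fun as => A.funcI f₀ as
    | .inr b => fun _ => cond b w.2 w.1
  eqI := fun _ => Eq
  eqEquiv := fun _ => eq_equivalence
  predCongr := fun _ P as bs h => by
    have hab : as = bs := funext fun i => h i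
    rw [hab]
  funcCongr := fun w f as bs h => by
    have hab : as = bs := funext fun i => h i
    rw [hab]

section Support

variable {M : Model σ} {s : Set M.W} {g : ℕ → M.D}

theorem support_neg_iff_of_flat {φ : Formula σ} {P : M.W → Prop}
    (hφ : ∀ u : Set M.W, Support M u g φ ↔ ∀ w ∈ u, P w) :
    Support M s g φ.neg ↔ ∀ w ∈ s, ¬ P w := by
  constructor
  · intro h w hw hPw
    exact Set.singleton_ne_empty w <|
      h {w} (Set.singleton_subset_iff.2 hw) ((hφ _).2 fun w' hw' => hw' ▸ hPw)
  · intro h u hus hu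
    exact Set.eq_empty_of_forall_notMem fun w hw => h w (hus hw) ((hφ u).1 hu w hw)

theorem support_neg_eq_iff {t t' : Term σ} :
    Support M s g (Formula.eq t t').neg ↔ ∀ w ∈ s, ¬ M.eqI w (t.val M w g) (t'.val M w g) :=
  support_neg_iff_of_flat fun _ => Iff.rfl

theorem support_conjList {l : List (Formula σ)} :
    Support M s g (conjList l) ↔ ∀ φ ∈ l, Support M s g φ := by
  induction l with
  | nil => simp [conjList, Formula.verum, Formula.neg, Support]
  | cons φ l ih => simp [conjList, Support, ← ih]

theorem support_cExists_iff {x : ℕ} {φ : Formula σ} :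
    Support M s g (cExists x φ) ↔ ∀ w ∈ s, ∃ d, Support M {w} (Function.update g x d) φ := by
  simp only [cExists, Formula.neg, Support]
  constructor
  · intro h w hw
    by_contra! hno
    refine Set.singleton_ne_empty w (h {w} (Set.singleton_subset_iff.2 hw) fun d u hu hφ => ?_)
    rcases Set.subset_singleton_iff_eq.1 hu with rfl | rfl
    · rfl
    · exact absurd hφ (hno d)
  · intro h u hus hu
    refine Set.eq_empty_of_forall_notMem fun w hw => ?_
    obtain ⟨d, hd⟩ := h w (hus hw)
    exact Set.singleton_ne_empty w (hu d {w} (Set.singleton_subset_iff.2 hw) hd)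

theorem support_foldr_cExists_iff {φ : Formula σ} (hφ : TruthConditional φ) (l : List ℕ) :
    Support M s g (l.foldr cExists φ) ↔
      ∀ w ∈ s, ∃ g', (∀ x ∉ l, g' x = g x) ∧ Support M {w} g' φ := by
  induction l generalizing s g with
  | nil =>
    rw [List.foldr_nil, hφ]
    refine forall₂_congr fun w _ => ⟨fun h => ⟨g, fun _ _ => rfl, h⟩, ?_⟩
    rintro ⟨g', hg', h⟩
    rwa [funext fun x => hg' x List.not_mem_nil] at h
  | cons a l ih =>
    simp only [List.foldr_cons, support_cExists_iff, ih, Set.mem_singleton_iff, forall_eq]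
    refine forall₂_congr fun w _ => ⟨?_, ?_⟩
    · rintro ⟨d, g', hg', h⟩
      refine ⟨g', fun x hx => ?_, h⟩
      rw [List.mem_cons, not_or] at hx
      rw [hg' x hx.2, Function.update_of_ne hx.1]
    · rintro ⟨g', hg', h⟩
      refine ⟨g' a, g', fun x hx => ?_, h⟩
      by_cases hxa : x = a
      · subst hxa; simp
      · rw [Function.update_of_ne hxa, hg' x (by simp [hx, hxa])]

end Support

def Model.EqConstOn (M : Model σ) (s : Set M.W) (w₀ : M.W) : Prop := ∀ w ∈ s, M.eqI w = M.eqI w₀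

def Model.cls (M : Model σ) (w₀ : M.W) : M.D → Quotient (M.setoidAt w₀) := Quotient.mk _

section EqConstOn

variable {M : Model σ} {s t : Set M.W} {g : ℕ → M.D} {w₀ : M.W}

theorem support_rho_iff :
    Support M s g rho ↔ ∀ d e, (∀ w ∈ s, M.eqI w d e) ∨ ∀ w ∈ s, ¬ M.eqI w d e := by
  simp [rho, Formula.qm, Support, support_neg_eq_iff, Term.val]

theorem support_rho_iff_eqConstOn (hw₀ : w₀ ∈ s) : Support M s g rho ↔ M.EqConstOn s w₀ := by
  rw [support_rho_iff]
  constructor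
  · intro h w hw
    ext d e
    rcases h d e with h | h
    · exact iff_of_true (h w hw) (h w₀ hw₀)
    · exact iff_of_false (h w hw) (h w₀ hw₀)
  · intro h d e
    by_cases hde : M.eqI w₀ d e
    · exact Or.inl fun w hw => h w hw ▸ hde
    · exact Or.inr fun w hw => h w hw ▸ hde

theorem Model.EqConstOn.mono (h : M.EqConstOn s w₀) (hts : t ⊆ s) : M.EqConstOn t w₀ :=
  fun w hw => h w (hts hw)

theorem Model.EqConstOn.eqI_iff (h : M.EqConstOn s w₀) {w : M.W} (hw : w ∈ s) {d e : M.D} :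
    M.eqI w d e ↔ M.cls w₀ d = M.cls w₀ e := by
  rw [h w hw, Model.cls, Quotient.eq]
  rfl

theorem support_lam_iff {x : ℕ} {τ : Term σ} {v : M.W → M.D} (hv : ∀ w g, τ.val M w g = v w) :
    Support M s g (lam x τ) ↔ ∃ d, ∀ w ∈ s, M.eqI w d (v w) := by
  simp [lam, Support, Term.val, hv]

theorem support_iexNe_iff {τ : Term σ} {v : M.W → M.D} (hv : ∀ w g, τ.val M w g = v w) :
    Support M s g (iexNe τ) ↔ ∃ d, ∀ w ∈ s, ¬ M.eqI w d (v w) := by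
  simp [iexNe, neTm, Support, support_neg_eq_iff, Term.val, hv]

theorem support_lam_iff_of_eqConstOn (hs : M.EqConstOn s w₀) {x : ℕ} {τ : Term σ}
    {v : M.W → M.D} (hv : ∀ w g, τ.val M w g = v w) :
    Support M s g (lam x τ) ↔ ∃ q, ∀ w ∈ s, M.cls w₀ (v w) = q := by
  rw [support_lam_iff hv, Quotient.mk_surjective.exists]
  refine exists_congr fun d => forall₂_congr fun w hw => ?_
  rw [hs.eqI_iff hw, eq_comm]
  rfl

theorem support_iexNe_iff_of_eqConstOn (hs : M.EqConstOn s w₀) {τ : Term σ}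
    {v : M.W → M.D} (hv : ∀ w g, τ.val M w g = v w) :
    Support M s g (iexNe τ) ↔ ∃ q, ∀ w ∈ s, M.cls w₀ (v w) ≠ q := by
  rw [support_iexNe_iff hv, Quotient.mk_surjective.exists]
  refine exists_congr fun d => forall₂_congr fun w hw => ?_
  rw [hs.eqI_iff hw, eq_comm]
  rfl

/-- `λτ₁ → λτ₂` is the dependence atom `=(τ₁; τ₂)`. -/
theorem support_dependence_iff (hs : M.EqConstOn s w₀) {x : ℕ} {τ₁ τ₂ : Term σ}
    {v₁ v₂ : M.W → M.D} (hv₁ : ∀ w g, τ₁.val M w g = v₁ w) (hv₂ : ∀ w g, τ₂.val M w g = v₂ w) :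
    Support M s g (.impl (lam x τ₁) (lam x τ₂)) ↔
      ∀ w ∈ s, ∀ w' ∈ s, M.cls w₀ (v₁ w) = M.cls w₀ (v₁ w') →
        M.cls w₀ (v₂ w) = M.cls w₀ (v₂ w') := by
  simp only [Support]
  constructor
  · intro h w hw w' hw' h₁
    have hpair : {w, w'} ⊆ s := Set.insert_subset hw (Set.singleton_subset_iff.2 hw')
    obtain ⟨q, hq⟩ := (support_lam_iff_of_eqConstOn (hs.mono hpair) hv₂).1 <|
      h _ hpair ((support_lam_iff_of_eqConstOn (hs.mono hpair) hv₁).2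
        ⟨M.cls w₀ (v₁ w), by simpa using h₁.symm⟩)
    simp only [Set.mem_insert_iff, Set.mem_singleton_iff, forall_eq_or_imp, forall_eq] at hq
    rw [hq.1, hq.2]
  · intro h u hus hu
    rw [support_lam_iff_of_eqConstOn (hs.mono hus) hv₁] at hu
    rw [support_lam_iff_of_eqConstOn (hs.mono hus) hv₂]
    obtain ⟨q, hq⟩ := hu
    rcases u.eq_empty_or_nonempty with rfl | ⟨w₁, hw₁⟩
    · exact ⟨M.cls w₀ (v₂ w₀), by simp⟩
    · exact ⟨_, fun w hw => h w (hus hw) w₁ (hus hw₁) ((hq w hw).trans (hq w₁ hw₁).symm)⟩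

end EqConstOn

def DetermineEachOther {ι Q : Type*} (α β : ι → Q) (t : Set ι) : Prop :=
  ∀ w ∈ t, ∀ w' ∈ t, α w = α w' ↔ β w = β w'

section SigAB

variable {M : Model sigAB} {s : Set M.W} {g : ℕ → M.D} {w₀ : M.W}

theorem val_tA (w : M.W) (g : ℕ → M.D) : tA.val M w g = aVal M w :=
  congrArg (M.funcI w false) (Subsingleton.elim (α := Fin 0 → M.D) _ _)

theorem val_tB (w : M.W) (g : ℕ → M.D) : tB.val M w g = bVal M w :=
  congrArg (M.funcI w true) (Subsingleton.elim (α := Fin 0 → M.D) _ _)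

theorem support_etaAB_iff (hs : M.EqConstOn s w₀) :
    Support M s g etaAB ↔ ∀ t ⊆ s,
      DetermineEachOther (fun w => M.cls w₀ (aVal M w)) (fun w => M.cls w₀ (bVal M w)) t →
      (fun w => M.cls w₀ (bVal M w)) '' t ≠ Set.univ →
      (fun w => M.cls w₀ (aVal M w)) '' t ≠ Set.univ := by
  rw [etaAB, etaOf, Support]
  refine forall₂_congr fun t hts => ?_
  have ht := hs.mono hts
  rw [Support, Support, support_dependence_iff ht val_tA val_tB,
    support_dependence_iff ht val_tB val_tA, support_iexNe_iff_of_eqConstOn ht val_tA,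
    support_iexNe_iff_of_eqConstOn ht val_tB]
  simp only [DetermineEachOther, Set.ne_univ_iff_exists_notMem, Set.mem_image, not_exists, not_and]
  constructor
  · intro h hdet hb
    exact h ⟨fun w hw w' hw' => (hdet w hw w' hw').1, fun w hw w' hw' => (hdet w hw w' hw').2, hb⟩
  · rintro h ⟨hab, hba, hb⟩
    exact h (fun w hw w' hw' => ⟨hab w hw w' hw', hba w hw w' hw'⟩) hb

theorem support_thetaAB_iff :
    Support M s g thetaAB ↔
      ∃ d e, ∀ w ∈ s, ¬ (M.eqI w d (aVal M w) ∧ M.eqI w e (bVal M w)) := by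
  simp only [thetaAB, thetaOf, Support]
  refine exists_congr fun d => exists_congr fun e => support_neg_iff_of_flat fun u => ?_
  simp [Support, Term.val, val_tA, val_tB, forall_and]

theorem exists_mem_of_not_support_thetaAB (hs : M.EqConstOn s w₀)
    (h : ¬ Support M s g thetaAB) (q q' : Quotient (M.setoidAt w₀)) :
    ∃ w ∈ s, M.cls w₀ (aVal M w) = q ∧ M.cls w₀ (bVal M w) = q' := by
  obtain ⟨d, rfl⟩ := Quotient.mk_surjective q
  obtain ⟨e, rfl⟩ := Quotient.mk_surjective q'
  rw [support_thetaAB_iff] at h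
  push Not at h
  obtain ⟨w, hw, hd, he⟩ := h d e
  rw [hs.eqI_iff hw] at hd he
  exact ⟨w, hw, hd.symm, he.symm⟩

theorem support_distinctFm_iff {n : ℕ} :
    Support M s g (distinctFm n) ↔ ∀ i j, i < j → j < n → ∀ w ∈ s, ¬ M.eqI w (g i) (g j) := by
  simp only [distinctFm, support_conjList, List.mem_flatMap, List.mem_filterMap, List.mem_range]
  constructor
  · intro h i j hij hj
    simpa [support_neg_eq_iff, Term.val] using h _ ⟨i, hij.trans hj, j, hj, if_pos hij⟩
  · rintro h φ ⟨i, -, j, hj, hφ⟩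
    split_ifs at hφ with hij
    cases hφ
    simpa [support_neg_eq_iff, Term.val] using h i j hij hj

theorem truthConditional_distinctFm (n : ℕ) : TruthConditional (distinctFm n) := by
  intro M s g
  simp only [support_distinctFm_iff, Set.mem_singleton_iff, forall_eq]
  exact ⟨fun h w hw i j hij hj => h i j hij hj w hw, fun h i j hij hj w hw => h w hw i j hij hj⟩

theorem support_chi_iff {n : ℕ} :
    Support M s g (chi n) ↔
      ∀ w ∈ s, ∃ v : ℕ → M.D, ∀ i j, i < j → j < n → ¬ M.eqI w (v i) (v j) := by
  simp only [chi, support_foldr_cExists_iff (truthConditional_distinctFm n),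
    support_distinctFm_iff, Set.mem_singleton_iff, forall_eq, List.mem_range, not_lt]
  refine forall₂_congr fun w _ => ⟨fun ⟨v, _, hv⟩ => ⟨v, hv⟩, fun ⟨v, hv⟩ => ?_⟩
  refine ⟨fun k => if k < n then v k else g k, fun k hk => if_neg hk.not_gt, fun i j hij hj => ?_⟩
  simpa [hj, hij.trans hj] using hv i j hij hj

theorem infinite_quotient_of_forall_support_chi (hw₀ : w₀ ∈ s)
    (h : ∀ n, Support M s g (chi n)) : Infinite (Quotient (M.setoidAt w₀)) := by
  refine not_finite_iff_infinite.1 fun hfin => ?_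
  set N := Nat.card (Quotient (M.setoidAt w₀))
  obtain ⟨v, hv⟩ := support_chi_iff.1 (h (N + 1)) w₀ hw₀
  have hinj : Function.Injective fun i : Fin (N + 1) => M.cls w₀ (v i) := by
    intro i j hij
    by_contra hne
    rcases lt_or_gt_of_ne (Fin.val_injective.ne hne) with hlt | hlt
    · exact hv i j hlt j.isLt (Quotient.exact hij)
    · exact hv j i hlt i.isLt (Quotient.exact hij.symm)
  simpa [N] using Nat.card_le_card_of_injective _ hinj

end SigAB

theorem exists_injective_not_surjective (Q : Type*) [Infinite Q] :
    ∃ f : Q → Q, Function.Injective f ∧ ¬ Function.Surjective f := by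
  have hcard : Cardinal.mk (Option Q) = Cardinal.mk Q := by
    rw [Cardinal.mk_option, Cardinal.add_one_eq (Cardinal.infinite_iff.1 ‹_›)]
  obtain ⟨e⟩ := Cardinal.eq.1 hcard
  refine ⟨e ∘ some, e.injective.comp (Option.some_injective Q), fun h => ?_⟩
  obtain ⟨q, hq⟩ := h (e none)
  exact Option.some_ne_none q (e.injective hq)

section Combinatorics

variable {ι Q : Type*} {α β : ι → Q}

theorem DetermineEachOther.image_ne_univ [Finite Q] {t : Set ι}
    (ht : DetermineEachOther α β t) (hβ : β '' t ≠ Set.univ) : α '' t ≠ Set.univ := by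
  intro hα
  choose W hWt hWα using fun q => (Set.eq_univ_iff_forall.1 hα q : q ∈ α '' t)
  have hinj : Function.Injective fun q => β (W q) := fun q q' h => by
    rw [← hWα q, ← hWα q']
    exact (ht _ (hWt q) _ (hWt q')).2 h
  refine hβ (Set.eq_univ_of_forall fun q => ?_)
  obtain ⟨q', hq'⟩ := Finite.injective_iff_surjective.1 hinj q
  exact ⟨W q', hWt q', hq'⟩

theorem finite_of_forall_image_ne_univ {s : Set ι}
    (hfull : ∀ q q', ∃ w ∈ s, α w = q ∧ β w = q')
    (h : ∀ t ⊆ s, DetermineEachOther α β t → β '' t ≠ Set.univ → α '' t ≠ Set.univ) :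
    Finite Q := by
  by_contra hQ
  have := not_finite_iff_infinite.1 hQ
  obtain ⟨f, hf, hfs⟩ := exists_injective_not_surjective Q
  choose W hWs hWα hWβ using fun q => hfull q (f q)
  refine h (Set.range W) (Set.range_subset_iff.2 hWs) ?_ ?_ ?_
  · rintro _ ⟨q, rfl⟩ _ ⟨q', rfl⟩
    rw [hWα, hWα, hWβ, hWβ, hf.eq_iff]
  · rw [← Set.range_comp]
    simpa [Function.comp_def, hWβ, Set.range_eq_univ] using hfs
  · rw [← Set.range_comp]
    simp [Function.comp_def, hWα]

end Combinatorics

section CanonModel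

variable {D : Type} {hD : Nonempty D} {s : Set (canonModel D hD).W}
  {g : ℕ → (canonModel D hD).D}

theorem canonModel_eqConstOn {w₀ : D × D} : (canonModel D hD).EqConstOn s w₀ :=
  fun _ _ => rfl

theorem support_etaAB_canonModel [Finite D] : Support (canonModel D hD) s g etaAB := by
  have : Finite (canonModel D hD).D := ‹Finite D›
  exact (support_etaAB_iff (w₀ := (hD.some, hD.some)) canonModel_eqConstOn).2
    fun _ _ ht => ht.image_ne_univ

theorem support_rho_canonModel : Support (canonModel D hD) Set.univ g rho :=
  (support_rho_iff_eqConstOn (Set.mem_univ (hD.some, hD.some))).2 canonModel_eqConstOn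

theorem not_support_thetaAB_canonModel : ¬ Support (canonModel D hD) Set.univ g thetaAB := by
  rw [support_thetaAB_iff]
  rintro ⟨d, e, h⟩
  exact h (d, e) (Set.mem_univ _) ⟨rfl, rfl⟩

theorem support_chi_canonModel_fin {N n : ℕ} (hn : n ≤ N + 1)
    {s : Set (canonModel (Fin (N + 1)) ⟨0⟩).W} {g : ℕ → (canonModel (Fin (N + 1)) ⟨0⟩).D} :
    Support (canonModel (Fin (N + 1)) ⟨0⟩) s g (chi n) := by
  refine support_chi_iff.2 fun _ _ => ⟨Fin.ofNat (N + 1), fun i j hij hj h => hij.ne ?_⟩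
  have h' : Fin.ofNat (N + 1) i = Fin.ofNat (N + 1) j := h
  simpa [Fin.ext_iff, Nat.mod_eq_of_lt (hij.trans_le (hj.le.trans hn) : i < N + 1),
    Nat.mod_eq_of_lt (hj.trans_le hn)] using h'

end CanonModel

def etaRhoChi : Set (Formula sigAB) := {etaAB, rho} ∪ Set.range chi

theorem entails_etaRhoChi_thetaAB : Entails etaRhoChi thetaAB := by
  intro M s g h
  have hη : Support M s g etaAB := h _ (Or.inl (Or.inl rfl))
  have hρ : Support M s g rho := h _ (Or.inl (Or.inr rfl))
  have hχ : ∀ n, Support M s g (chi n) := fun n => h _ (Or.inr ⟨n, rfl⟩)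
  by_contra hθ
  obtain ⟨w₀, hw₀⟩ : s.Nonempty := by
    by_contra! hs
    obtain ⟨d⟩ := M.dNonempty
    exact hθ (support_thetaAB_iff.2 ⟨d, d, by simp [hs]⟩)
  have hs : M.EqConstOn s w₀ := (support_rho_iff_eqConstOn hw₀).1 hρ
  have := infinite_quotient_of_forall_support_chi hw₀ hχ
  exact not_finite_iff_infinite.2 this (finite_of_forall_image_ne_univ
    (exists_mem_of_not_support_thetaAB hs hθ) ((support_etaAB_iff hs).1 hη))

theorem exists_subset_union_image_Iic_of_finite {α : Type*} {A Φ₀ : Set α} {f : ℕ → α}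
    (hfin : Φ₀.Finite) (h : Φ₀ ⊆ A ∪ Set.range f) : ∃ N, Φ₀ ⊆ A ∪ f '' Set.Iic N := by
  have hsub : Φ₀ ∩ Set.range f ⊆ f '' Set.univ := Set.image_univ ▸ Set.inter_subset_right
  obtain ⟨S, -, hS, hΦS⟩ := Set.exists_subset_image_finite_and.1
    ⟨Φ₀ ∩ Set.range f, hsub, hfin.inter_of_left _, subset_rfl⟩
  obtain ⟨N, hN⟩ := hS.bddAbove
  refine ⟨N, fun φ hφ => (h hφ).imp id fun hφf => ?_⟩
  obtain ⟨n, hn, rfl⟩ := hΦS ⟨hφ, hφf⟩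
  exact ⟨n, hN hn, rfl⟩

theorem not_entails_thetaAB_of_finite {Φ₀ : Set (Formula sigAB)} (h : Φ₀ ⊆ etaRhoChi)
    (hfin : Φ₀.Finite) : ¬ Entails Φ₀ thetaAB := by
  obtain ⟨N, hN⟩ := exists_subset_union_image_Iic_of_finite hfin h
  intro hent
  refine not_support_thetaAB_canonModel
    (hent (canonModel (Fin (N + 1)) ⟨0⟩) Set.univ (fun _ => (0 : Fin (N + 1))) fun φ hφ => ?_)
  rcases hN hφ with (rfl | rfl) | ⟨n, hn, rfl⟩
  · exact support_etaAB_canonModel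
  · exact support_rho_canonModel
  · exact support_chi_canonModel_fin (Nat.le_succ_of_le hn)

/-- InqBQ is not entailment-compact (over all first-order information
models). -/
theorem inqbq_not_compact :
    ∃ (Φ : Set (Formula sigAB)) (ψ : Formula sigAB),
      Entails Φ ψ ∧ ∀ Φ₀ ⊆ Φ, Φ₀.Finite → ¬ Entails Φ₀ ψ :=
  ⟨etaRhoChi, thetaAB, entails_etaRhoChi_thetaAB,
    fun _ h hfin => not_entails_thetaAB_of_finite h hfin⟩

end InqBQ
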